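/- Suppose X is a connected k-regular graph on n vertices of diameter d having exactly d+1 distinct adjacency eigenvalues θ_0 > θ_1 > ... > θ_d. Then for every pair of vertices u, v with d(u,v) = d one has (A^d)_{u,v} = (1/n) · Π_{s=1}^{d} (θ_0 − θ_s). -/

import Mathlib

/-!
Write `A = ∑ θ_r E_r`, so that `P(A) = ∑ P(θ_r) E_r` for every polynomial `P`. For the monic
polynomial `P = ∏_{s ≥ 1} (x - θ_s)` of degree `d` only the term `r = 0` survives, while the lower
powers of `A` vanish at `(u, v)` because every walk from `u` to `v` has length at least `d`; hence
`(A^d)_{uv} = P(θ_0) (E_0)_{uv}`. For a connected `k`-regular graph the Laplacian `kI - A` is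
positive semidefinite with kernel the constants, and `k` is an eigenvalue on the all-ones vector:
so `θ_0 = k`, the columns of `E_0` are constant and `E_0 = J / n`.
-/

open Matrix Finset Polynomial

variable {V : Type*}

/-- The eccentricity of a vertex: maximum graph distance to any vertex. -/
noncomputable def ecc [Fintype V] (X : SimpleGraph V) (u : V) : ℕ :=
  Finset.univ.sup fun w => X.dist u w

/-- The standard basis vector of a vertex. -/
def eVec [DecidableEq V] (u : V) : V → ℝ := Pi.single u 1

/-- `SpectralDecomp X d θ E` : `θ 0 > θ 1 > ... > θ d` are the distinct eigenvalues of the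
adjacency matrix of `X` and `E r` is the orthogonal projection onto the `θ r`-eigenspace. -/
structure SpectralDecomp [Fintype V] [DecidableEq V] (X : SimpleGraph V) [DecidableRel X.Adj]
    (d : ℕ) (θ : Fin (d + 1) → ℝ) (E : Fin (d + 1) → Matrix V V ℝ) : Prop where
  decomp : X.adjMatrix ℝ = ∑ r, θ r • E r
  sum_eq_one : ∑ r, E r = 1
  orth : ∀ r s, E r * E s = if r = s then E r else 0
  symm : ∀ r, (E r)ᵀ = E r
  strict_anti : ∀ r s : Fin (d + 1), r < s → θ s < θ r
  proj_ne_zero : ∀ r, E r ≠ 0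

open scoped Classical in
/-- The (index set of the) eigenvalue support of a vertex `u`:
those `r` with `E r * e_u ≠ 0`. -/
noncomputable def suppIdx [Fintype V] [DecidableEq V] {d : ℕ}
    (E : Fin (d + 1) → Matrix V V ℝ) (u : V) : Finset (Fin (d + 1)) :=
  Finset.univ.filter fun r => E r *ᵥ eVec u ≠ 0

/-- The dual degree `d*(u) = |Φ_u| - 1`. -/
noncomputable def dualDeg [Fintype V] [DecidableEq V] {d : ℕ}
    (E : Fin (d + 1) → Matrix V V ℝ) (u : V) : ℕ :=
  (suppIdx E u).card - 1

/-- A vertex is spectrally extremal if its eccentricity equals its dual degree. -/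
noncomputable def SpectrallyExtremal [Fintype V] [DecidableEq V] (X : SimpleGraph V) {d : ℕ}
    (E : Fin (d + 1) → Matrix V V ℝ) (u : V) : Prop :=
  ecc X u = dualDeg E u

/-- Vertices are cospectral if the diagonal entries of all spectral projections agree. -/
def Cospectral [Fintype V] [DecidableEq V] {d : ℕ}
    (E : Fin (d + 1) → Matrix V V ℝ) (u v : V) : Prop :=
  ∀ r, E r u u = E r v v

/-- Vertices are strongly cospectral if `E r e_u = ± E r e_v` for every `r`. -/
def StronglyCospectral [Fintype V] [DecidableEq V] {d : ℕ}
    (E : Fin (d + 1) → Matrix V V ℝ) (u v : V) : Prop :=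
  ∀ r, E r *ᵥ eVec v = E r *ᵥ eVec u ∨ E r *ᵥ eVec v = -(E r *ᵥ eVec u)

/-- `u` and `v` are antipodal vertices: they are cospectral, the distance partition of `u`
coincides with that of `v`, it is pseudo equitable (with respect to a positive Perron
eigenvector), and `{u}`, `{v}` are singleton classes at maximum distance from each other. -/
noncomputable def Antipodal [Fintype V] [DecidableEq V] (X : SimpleGraph V) [DecidableRel X.Adj]
    {d : ℕ} (θ : Fin (d + 1) → ℝ) (E : Fin (d + 1) → Matrix V V ℝ) (u v : V) : Prop :=
  Cospectral E u v ∧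
  -- the two distance partitions have the same classes
  (∀ i : ℕ, i ≤ ecc X u → ∃ j : ℕ, ∀ w, X.dist u w = i ↔ X.dist v w = j) ∧
  (∀ j : ℕ, j ≤ ecc X v → ∃ i : ℕ, ∀ w, X.dist u w = i ↔ X.dist v w = j) ∧
  -- `{u}` and `{v}` are singletons at maximum distance from each other
  X.dist u v = ecc X u ∧ X.dist u v = ecc X v ∧
  (∀ w, X.dist u w = X.dist u v → w = v) ∧
  (∀ w, X.dist v w = X.dist u v → w = u) ∧
  -- the partition is pseudo equitable with respect to a positive eigenvector
  -- for the largest eigenvalue `θ 0`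
  ∃ x : V → ℝ, (∀ w, 0 < x w) ∧ X.adjMatrix ℝ *ᵥ x = θ 0 • x ∧
    ∀ i : ℕ, ∀ w₁ w₂ : V, X.dist u w₁ = X.dist u w₂ →
      ∑ c ∈ Finset.univ.filter (fun c => X.dist u c = i),
          (X.adjMatrix ℝ) w₁ c * x c / x w₁
        = ∑ c ∈ Finset.univ.filter (fun c => X.dist u c = i),
          (X.adjMatrix ℝ) w₂ c * x c / x w₂

/-- Perfect state transfer from `u` to `v` at time `t`:
`|(exp (i t A))_{v,u}| = 1`. -/
noncomputable def PST [Fintype V] [DecidableEq V] (X : SimpleGraph V) [DecidableRel X.Adj]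
    (u v : V) (t : ℝ) : Prop :=
  ‖(NormedSpace.exp ((Complex.I * (t : ℂ)) • X.adjMatrix ℂ)) v u‖ = 1

/-- `X` is distance-regular: there are intersection numbers `a i`, `b i`, `c i` such that
any vertex `w` at distance `i` from `u` has exactly `c i` neighbours at distance `i - 1`
from `u`, `a i` neighbours at distance `i`, and `b i` neighbours at distance `i + 1`. -/
noncomputable def IsDistanceRegular [Fintype V] (X : SimpleGraph V) [DecidableRel X.Adj] :
    Prop :=
  ∃ a b c : ℕ → ℕ, ∀ (i : ℕ) (u w : V), X.dist u w = i →
    (Finset.univ.filter (fun z => X.Adj w z ∧ X.dist u z + 1 = i)).card = c i ∧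
    (Finset.univ.filter (fun z => X.Adj w z ∧ X.dist u z = i)).card = a i ∧
    (Finset.univ.filter (fun z => X.Adj w z ∧ X.dist u z = i + 1)).card = b i

variable [Fintype V] [DecidableEq V]

namespace SimpleGraph

variable {G : SimpleGraph V} [DecidableRel G.Adj]

theorem adjMatrix_pow_apply_eq_zero_of_lt_dist {R : Type*} [Semiring R] {i : ℕ} {u v : V}
    (hi : i < G.dist u v) : (G.adjMatrix R ^ i) u v = 0 := by
  rw [adjMatrix_pow_apply_eq_card_walk, Fintype.card_eq_zero_iff.mpr, Nat.cast_zero]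
  exact ⟨fun ⟨p, hp⟩ => (G.dist_le p).not_gt (hp ▸ hi)⟩

theorem aeval_adjMatrix_apply_of_dist_eq_natDegree {R : Type*} [CommSemiring R] {P : R[X]}
    (hP : P.Monic) {u v : V} (hdist : G.dist u v = P.natDegree) :
    aeval (G.adjMatrix R) P u v = (G.adjMatrix R ^ P.natDegree) u v := by
  rw [aeval_eq_sum_range, Matrix.sum_apply, Finset.sum_eq_single P.natDegree]
  · rw [Matrix.smul_apply, hP.coeff_natDegree, one_smul]
  · intro i hi hne
    have hlt : i < G.dist u v := hdist ▸ lt_of_le_of_ne (Nat.lt_succ_iff.mp (mem_range.mp hi)) hne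
    rw [Matrix.smul_apply, adjMatrix_pow_apply_eq_zero_of_lt_dist hlt, smul_zero]
  · simp

namespace IsRegularOfDegree

variable {k : ℕ}

theorem lapMatrix_mulVec {R : Type*} [NonAssocRing R] (hreg : G.IsRegularOfDegree k)
    (x : V → R) : G.lapMatrix R *ᵥ x = (k : R) • x - G.adjMatrix R *ᵥ x := by
  ext v
  rw [lapMatrix_mulVec_apply, Pi.sub_apply, adjMatrix_mulVec_apply, hreg v, Pi.smul_apply,
    smul_eq_mul]

theorem le_of_adjMatrix_mulVec_eq_smul (hreg : G.IsRegularOfDegree k) {μ : ℝ} {x : V → ℝ}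
    (hx0 : x ≠ 0) (hx : G.adjMatrix ℝ *ᵥ x = μ • x) : μ ≤ k := by
  have hL := (posSemidef_lapMatrix ℝ G).dotProduct_mulVec_nonneg x
  rw [star_trivial, hreg.lapMatrix_mulVec, hx, ← sub_smul, dotProduct_smul, smul_eq_mul] at hL
  have hxx : 0 < x ⬝ᵥ x :=
    lt_of_le_of_ne (dotProduct_self_star_nonneg x) (Ne.symm (dotProduct_self_eq_zero.not.mpr hx0))
  exact sub_nonneg.mp (nonneg_of_mul_nonneg_left hL hxx)

theorem eq_of_adjMatrix_mulVec_eq_smul (hreg : G.IsRegularOfDegree k) (hconn : G.Connected)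
    {x : V → ℝ} (hx : G.adjMatrix ℝ *ᵥ x = (k : ℝ) • x) (a b : V) : x a = x b :=
  (lapMatrix_mulVec_eq_zero_iff_forall_reachable G).mp
    (by rw [hreg.lapMatrix_mulVec, hx, sub_self]) a b (hconn a b)

end IsRegularOfDegree

end SimpleGraph

namespace SpectralDecomp

variable {G : SimpleGraph V} [DecidableRel G.Adj]
  {d : ℕ} {θ : Fin (d + 1) → ℝ} {E : Fin (d + 1) → Matrix V V ℝ}

theorem sum_smul_mul_proj (h : SpectralDecomp G d θ E) (f : Fin (d + 1) → ℝ) (r : Fin (d + 1)) :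
    (∑ s, f s • E s) * E r = f r • E r := by
  rw [Finset.sum_mul, Finset.sum_eq_single r]
  · rw [Matrix.smul_mul, h.orth, if_pos rfl]
  · intro s _ hs
    rw [Matrix.smul_mul, h.orth, if_neg hs, smul_zero]
  · simp

theorem proj_mul_sum_smul (h : SpectralDecomp G d θ E) (f : Fin (d + 1) → ℝ) (r : Fin (d + 1)) :
    E r * (∑ s, f s • E s) = f r • E r := by
  rw [Finset.mul_sum, Finset.sum_eq_single r]
  · rw [Matrix.mul_smul, h.orth, if_pos rfl]
  · intro s _ hs
    rw [Matrix.mul_smul, h.orth, if_neg (Ne.symm hs), smul_zero]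
  · simp

theorem adjMatrix_mul_proj (h : SpectralDecomp G d θ E) (r : Fin (d + 1)) :
    G.adjMatrix ℝ * E r = θ r • E r := by
  rw [h.decomp]
  exact h.sum_smul_mul_proj θ r

theorem proj_mul_adjMatrix (h : SpectralDecomp G d θ E) (r : Fin (d + 1)) :
    E r * G.adjMatrix ℝ = θ r • E r := by
  rw [h.decomp]
  exact h.proj_mul_sum_smul θ r

theorem adjMatrix_pow_eq_sum (h : SpectralDecomp G d θ E) (m : ℕ) :
    G.adjMatrix ℝ ^ m = ∑ r, θ r ^ m • E r := by
  induction m with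
  | zero => simpa using h.sum_eq_one.symm
  | succ m ih =>
    rw [pow_succ, ih, Finset.sum_mul]
    exact Finset.sum_congr rfl fun r _ => by
      rw [Matrix.smul_mul, h.proj_mul_adjMatrix, smul_smul, pow_succ]

theorem aeval_adjMatrix_eq_sum (h : SpectralDecomp G d θ E) (P : ℝ[X]) :
    aeval (G.adjMatrix ℝ) P = ∑ r, P.eval (θ r) • E r := by
  induction P using Polynomial.induction_on' with
  | add p q hp hq =>
    simp only [map_add, hp, hq, eval_add, add_smul, Finset.sum_add_distrib]
  | monomial m a =>
    rw [aeval_monomial, ← Algebra.smul_def, h.adjMatrix_pow_eq_sum, Finset.smul_sum]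
    simp only [smul_smul, eval_monomial]

theorem aeval_adjMatrix_prod_Ioi_zero (h : SpectralDecomp G d θ E) :
    aeval (G.adjMatrix ℝ) (∏ s ∈ Ioi 0, (X - C (θ s))) = (∏ s ∈ Ioi 0, (θ 0 - θ s)) • E 0 := by
  rw [h.aeval_adjMatrix_eq_sum, Finset.sum_eq_single 0]
  · simp [eval_prod]
  · intro r _ hr
    rw [eval_prod, Finset.prod_eq_zero (mem_Ioi.mpr (Fin.pos_iff_ne_zero.mpr hr)) (by simp),
      zero_smul]
  · simp

theorem theta_le_theta_zero (h : SpectralDecomp G d θ E) (r : Fin (d + 1)) : θ r ≤ θ 0 := by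
  rcases (Fin.zero_le r).eq_or_lt with rfl | hr
  · rfl
  · exact (h.strict_anti 0 r hr).le

theorem adjMatrix_mulVec_proj_mulVec (h : SpectralDecomp G d θ E) (r : Fin (d + 1)) (x : V → ℝ) :
    G.adjMatrix ℝ *ᵥ (E r *ᵥ x) = θ r • (E r *ᵥ x) := by
  rw [mulVec_mulVec, h.adjMatrix_mul_proj, smul_mulVec]

theorem theta_le_degree {k : ℕ} (h : SpectralDecomp G d θ E) (hreg : G.IsRegularOfDegree k)
    (r : Fin (d + 1)) : θ r ≤ k := by
  obtain ⟨x, hx⟩ : ∃ x, E r *ᵥ x ≠ 0 := by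
    by_contra! hzero
    exact h.proj_ne_zero r (ext_iff_mulVec.mpr fun x => by rw [hzero, zero_mulVec])
  exact hreg.le_of_adjMatrix_mulVec_eq_smul hx (h.adjMatrix_mulVec_proj_mulVec r x)

theorem exists_theta_eq_degree {k : ℕ} (h : SpectralDecomp G d θ E)
    (hreg : G.IsRegularOfDegree k) [Nonempty V] : ∃ r, θ r = k := by
  set one : V → ℝ := fun _ => 1
  have hA : G.adjMatrix ℝ *ᵥ one = (k : ℝ) • one := by
    ext v
    simp [one, hreg v]
  have hsum : ∑ r, E r *ᵥ one = one := by
    rw [← sum_mulVec, h.sum_eq_one, one_mulVec]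
  have hne : ∑ r, E r *ᵥ one ≠ 0 := by
    rw [hsum]
    exact Function.ne_iff.mpr ⟨Classical.arbitrary V, one_ne_zero⟩
  obtain ⟨r, -, hr⟩ := Finset.exists_ne_zero_of_sum_ne_zero hne
  refine ⟨r, smul_left_injective ℝ hr ?_⟩
  calc θ r • (E r *ᵥ one) = E r *ᵥ (G.adjMatrix ℝ *ᵥ one) := by
        rw [mulVec_mulVec, h.proj_mul_adjMatrix, smul_mulVec]
    _ = (k : ℝ) • (E r *ᵥ one) := by rw [hA, mulVec_smul]

theorem theta_zero_eq_degree {k : ℕ} (h : SpectralDecomp G d θ E)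
    (hreg : G.IsRegularOfDegree k) [Nonempty V] : θ 0 = k := by
  obtain ⟨r, hr⟩ := h.exists_theta_eq_degree hreg
  exact le_antisymm (h.theta_le_degree hreg 0) (hr ▸ h.theta_le_theta_zero r)

theorem proj_zero_apply {k : ℕ} (h : SpectralDecomp G d θ E) (hconn : G.Connected)
    (hreg : G.IsRegularOfDegree k) (a b : V) : E 0 a b = 1 / Fintype.card V := by
  have : Nonempty V := ⟨a⟩
  have hcol (x x' y : V) : E 0 x y = E 0 x' y := by
    have hx := h.adjMatrix_mulVec_proj_mulVec 0 (Pi.single y 1)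
    rw [h.theta_zero_eq_degree hreg] at hx
    simpa [mulVec_single_one] using hreg.eq_of_adjMatrix_mulVec_eq_smul hconn hx x x'
  have hconst (x y : V) : E 0 x y = E 0 a a := by
    rw [hcol x a y, ← transpose_apply (E 0) y a, h.symm, hcol y a a]
  have hne : E 0 a a ≠ 0 := fun h0 =>
    h.proj_ne_zero 0 (Matrix.ext fun x y => by rw [hconst, h0, Matrix.zero_apply])
  have hidem : E 0 a a = Fintype.card V * E 0 a a * E 0 a a := by
    calc E 0 a a = (E 0 * E 0) a a := by rw [h.orth, if_pos rfl]
      _ = ∑ y, E 0 a y * E 0 y a := mul_apply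
      _ = Fintype.card V * E 0 a a * E 0 a a := by
        simp only [hconst _ a, hconst a _]
        rw [sum_const, card_univ, nsmul_eq_mul, mul_assoc]
  rw [hconst]
  exact eq_one_div_of_mul_eq_one_right (mul_right_cancel₀ hne (by rwa [one_mul, eq_comm]))

end SpectralDecomp

theorem stmt_13_general (X : SimpleGraph V) [DecidableRel X.Adj] (hconn : X.Connected)
    (n k d : ℕ) (hn : Fintype.card V = n) (hreg : X.IsRegularOfDegree k)
    (θ : Fin (d + 1) → ℝ) (E : Fin (d + 1) → Matrix V V ℝ)
    (hspec : SpectralDecomp X d θ E) (u v : V) (huv : X.dist u v = d) :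
    ((X.adjMatrix ℝ) ^ d) u v =
      (1 / (n : ℝ)) * ∏ s ∈ Finset.Ioi (0 : Fin (d + 1)), (θ 0 - θ s) := by
  have hdeg : (∏ s ∈ Ioi (0 : Fin (d + 1)), (Polynomial.X - C (θ s))).natDegree = d := by
    simp
  have key := X.aeval_adjMatrix_apply_of_dist_eq_natDegree (monic_prod_X_sub_C θ _)
    (huv.trans hdeg.symm) (R := ℝ)
  rw [hdeg, hspec.aeval_adjMatrix_prod_Ioi_zero, Matrix.smul_apply, smul_eq_mul,
    hspec.proj_zero_apply hconn hreg, hn] at key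
  rw [← key, mul_comm]

/-- In a connected `k`-regular graph on `n` vertices of diameter `d` with
exactly `d+1` distinct eigenvalues `θ_0 > ... > θ_d`, every pair `u, v` at distance `d`
satisfies `(A^d)_uv = (1/n) ∏_{s=1}^{d} (θ_0 - θ_s)`. -/
theorem stmt_13 (X : SimpleGraph V) [DecidableRel X.Adj] (hconn : X.Connected)
    (n k d : ℕ) (hn : Fintype.card V = n) (hreg : X.IsRegularOfDegree k)
    (hdiam : ∀ w z : V, X.dist w z ≤ d) (hdiam' : ∃ w z : V, X.dist w z = d)
    (θ : Fin (d + 1) → ℝ) (E : Fin (d + 1) → Matrix V V ℝ)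
    (hspec : SpectralDecomp X d θ E) (u v : V) (huv : X.dist u v = d) :
    ((X.adjMatrix ℝ) ^ d) u v =
      (1 / (n : ℝ)) * ∏ s ∈ Finset.Ioi (0 : Fin (d + 1)), (θ 0 - θ s) :=
  stmt_13_general X hconn n k d hn hreg θ E hspec u v huv
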